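/- Let 𝕋 be an almost periodic time scale (Π ≠ {0}) and u ∈ U_∞^Inv. If f : ℝ → ℝ is Lipschitz continuous, φ ∈ PAP(𝕋,ℝ,u), and τ ∈ Π, then the function Γ : 𝕋 → ℝ, Γ(t) = f(φ(t − τ)), belongs to PAP(𝕋,ℝ,u). -/

import Mathlib

open MeasureTheory Filter Set

noncomputable section

/-- Forward jump operator of a time scale `T`. -/
def tsSigma (T : Set ℝ) (t : ℝ) : ℝ := sInf {s | s ∈ T ∧ t < s}

/-- Graininess of a time scale. -/
def tsGrain (T : Set ℝ) (t : ℝ) : ℝ := tsSigma T t - t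

/-- The set `Π` of translation numbers of a time scale. -/
def tsPi (T : Set ℝ) : Set ℝ := {τ : ℝ | ∀ t ∈ T, t + τ ∈ T ∧ t - τ ∈ T}

/-- An almost periodic time scale: a nonempty closed subset of `ℝ` with `Π ≠ {0}`. -/
def APTimeScale (T : Set ℝ) : Prop :=
  T.Nonempty ∧ IsClosed T ∧ ∃ τ ∈ tsPi T, τ ≠ 0

/-- The Δ-measure of the time scale `T`:
Lebesgue measure restricted to `T` plus point masses `μ(t)·δ_t` at right-scattered points. -/
def deltaMeasure (T : Set ℝ) : Measure ℝ :=
  volume.restrict T +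
    Measure.sum (fun p : {t : ℝ // t ∈ T ∧ t < tsSigma T t} =>
      (ENNReal.ofReal (tsGrain T p.1)) • Measure.dirac (p.1 : ℝ))

/-- The integrand `g_a` appearing in the generalized exponential function. -/
def gExp (T : Set ℝ) (a : ℝ) (τ : ℝ) : ℝ :=
  if 0 < tsGrain T τ then Real.log (1 + tsGrain T τ * a) / tsGrain T τ else a

/-- The generalized exponential function `e_{⊖a}(t, s)` (intended for `s ≤ t`). -/
def eOminus (T : Set ℝ) (a t s : ℝ) : ℝ :=
  Real.exp (-∫ τ in Ico s t ∩ T, gExp T a τ ∂(deltaMeasure T))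

/-- `t̄ = min([0,∞) ∩ T)`. -/
def tsT0 (T : Set ℝ) : ℝ := sInf {t : ℝ | t ∈ T ∧ 0 ≤ t}

/-- `Q_r = [t̄ - r, t̄ + r] ∩ T`. -/
def Qr (T : Set ℝ) (r : ℝ) : Set ℝ := Icc (tsT0 T - r) (tsT0 T + r) ∩ T

/-- `u(Q_r) = ∫_{Q_r} u dμ_Δ`. -/
def uQ (T : Set ℝ) (u : ℝ → ℝ) (r : ℝ) : ℝ := ∫ t in Qr T r, u t ∂(deltaMeasure T)

/-- The filter `r → ∞` along `Π`. -/
def alongPi (T : Set ℝ) : Filter ℝ := atTop ⊓ 𝓟 (tsPi T)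

/-- The filter `|t| → ∞`, `t ∈ T`. -/
def absAtTopIn (T : Set ℝ) : Filter ℝ := (atTop ⊔ atBot) ⊓ 𝓟 T

/-- The class `U_∞` of admissible weights on the time scale `T`. -/
def UInfty (T : Set ℝ) (u : ℝ → ℝ) : Prop :=
  Measurable u ∧ (∀ t ∈ T, 0 < u t) ∧
  (∀ s : Set ℝ, Bornology.IsBounded s → IntegrableOn u (s ∩ T) (deltaMeasure T)) ∧
  (∃ c > 0, ∀ t ∈ T, c ≤ u t) ∧
  Tendsto (uQ T u) (alongPi T) atTop

/-- The class `U_∞^Inv` of weights: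
`limsup_{|t|→∞, t∈T} u(t+s)/u(t) < ∞` for every `s ∈ Π`. -/
def UInftyInv (T : Set ℝ) (u : ℝ → ℝ) : Prop :=
  UInfty T u ∧ ∀ s ∈ tsPi T, ∃ C : ℝ, ∀ᶠ t in absAtTopIn T, u (t + s) / u t ≤ C

variable {E : Type*} [NormedAddCommGroup E]

/-- Almost periodic functions on a time scale (Bohr-type definition via `Π`). -/
def APfun (T : Set ℝ) (f : ℝ → E) : Prop :=
  ContinuousOn f T ∧
  ∀ ε > 0, ∃ l > 0, ∀ x : ℝ, ∃ τ ∈ tsPi T, τ ∈ Icc x (x + l) ∧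
    ∀ t ∈ T, ‖f (t + τ) - f t‖ < ε

/-- Bounded continuous functions on the time scale `T`. -/
def BCfun (T : Set ℝ) (f : ℝ → E) : Prop :=
  ContinuousOn f T ∧ ∃ C : ℝ, ∀ t ∈ T, ‖f t‖ ≤ C

/-- The weighted ergodic space `PAP₀(T, E, u)`. -/
def PAP0fun (T : Set ℝ) (u : ℝ → ℝ) (f : ℝ → E) : Prop :=
  BCfun T f ∧
  Tendsto (fun r => (uQ T u r)⁻¹ * ∫ t in Qr T r, ‖f t‖ * u t ∂(deltaMeasure T))
    (alongPi T) (nhds 0)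

/-- Weighted pseudo-almost periodic functions on the time scale `T`. -/
def PAPfun (T : Set ℝ) (u : ℝ → ℝ) (f : ℝ → E) : Prop :=
  ∃ g h : ℝ → E, APfun T g ∧ PAP0fun T u h ∧ ∀ t ∈ T, f t = g t + h t

/-- `d` is the Δ-derivative of `f` at `t ∈ T`. -/
def deltaDeriv [NormedSpace ℝ E] (T : Set ℝ) (f : ℝ → E) (t : ℝ) (d : E) : Prop :=
  ∀ ε > 0, ∃ δ > 0, ∀ s ∈ T, |s - t| < δ →
    ‖f (tsSigma T t) - f s - (tsSigma T t - s) • d‖ ≤ ε * |tsSigma T t - s|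

/-- A fixed matrix norm (the ℓ¹ norm of the entries). -/
def matNorm {n : ℕ} (M : Matrix (Fin n) (Fin n) ℝ) : ℝ := ∑ i, ∑ j, |M i j|

/-- The linear system `x^Δ = A(t) x` admits an exponential dichotomy on `T`. -/
def ExpDichotomy {n : ℕ} (T : Set ℝ) (A : ℝ → Matrix (Fin n) (Fin n) ℝ) : Prop :=
  ∃ K > (0 : ℝ), ∃ α > (0 : ℝ), ∃ P : Matrix (Fin n) (Fin n) ℝ, P * P = P ∧
    ∃ X : ℝ → Matrix (Fin n) (Fin n) ℝ,
      (∀ t ∈ T, IsUnit (X t)) ∧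
      (∀ t ∈ T, ∀ i j, deltaDeriv T (fun s => X s i j) t ((A t * X t) i j)) ∧
      (∀ s ∈ T, ∀ t ∈ T, tsSigma T s ≤ t →
        matNorm (X t * P * (X (tsSigma T s))⁻¹) ≤ K * eOminus T α t (tsSigma T s)) ∧
      (∀ s ∈ T, ∀ t ∈ T, t ≤ tsSigma T s →
        matNorm (X t * (1 - P) * (X (tsSigma T s))⁻¹) ≤ K * eOminus T α (tsSigma T s) t)

/-- `x` is a bounded continuous solution on `T` of `x^Δ(t) = A(t) x(t) + F(t)`. -/
def IsLinBddSol {n : ℕ} (T : Set ℝ) (A : ℝ → Matrix (Fin n) (Fin n) ℝ)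
    (F x : ℝ → Fin n → ℝ) : Prop :=
  BCfun T x ∧ ∀ t ∈ T, deltaDeriv T x t ((A t).mulVec (x t) + F t)

/-- `x` is a (continuous, Δ-differentiable) solution of the delayed cellular neural network
on the set `S ⊆ T`. -/
def IsCNNSol {n : ℕ} (T S : Set ℝ) (c : Fin n → ℝ → ℝ) (a b : Fin n → Fin n → ℝ → ℝ)
    (f : Fin n → ℝ → ℝ) (γ : Fin n → Fin n → ℝ) (I : Fin n → ℝ → ℝ)
    (x : ℝ → Fin n → ℝ) : Prop :=
  ContinuousOn x T ∧
  ∀ t ∈ S, ∀ i, deltaDeriv T (fun s => x s i) t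
    (-(c i t) * x t i + (∑ j, a i j t * f j (x t j)) +
      (∑ j, b i j t * f j (x (t - γ i j) j)) + I i t)

end

open scoped Topology

/-!
Write `φ = g + h` with `g` almost periodic and `h ∈ PAP₀`. Then
`Γ = f (g (· - τ)) + (f (φ (· - τ)) - f (g (· - τ)))`: the first summand is almost periodic and the
second is dominated by `L ‖h (· - τ)‖`, so it suffices that `PAP₀` is invariant under delays
`τ ∈ Π`. Translation by `τ` preserves the Δ-measure, hence
`∫_{Q_r} ‖h (t - τ)‖ u(t) = ∫_{Q_r - τ} ‖h s‖ u(s + τ) ≤ K + C ∫_{Q_{r+|τ|}} ‖h‖ u`, because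
`u ∈ U_∞^Inv` bounds `u (s + τ)` by `C u(s)` off a compact set. The same bound applied to `u` itself
gives `u(Q_{r+|τ|}) ≤ K' + C' u(Q_r)`, so the mean over `Q_{r+|τ|}` controls the mean over `Q_r`.
-/

lemma setIntegral_union_le_add {α : Type*} [MeasurableSpace α] {μ : Measure α} {f : α → ℝ}
    {s t : Set α} (hs : MeasurableSet s) (ht : MeasurableSet t) (hfs : IntegrableOn f s μ)
    (hft : IntegrableOn f t μ) (hf : ∀ x ∈ t, 0 ≤ f x) :
    ∫ x in s ∪ t, f x ∂μ ≤ ∫ x in s, f x ∂μ + ∫ x in t, f x ∂μ := by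
  rw [← Set.union_sdiff_self, setIntegral_union disjoint_sdiff_right (ht.diff hs) hfs
    (hft.mono_set sdiff_subset)]
  exact add_le_add_right
    (setIntegral_mono_set hft (ae_restrict_of_forall_mem ht hf) sdiff_subset.eventuallyLE) _

lemma tendsto_inv_mul_nhds_zero_of_le {α : Type*} {l : Filter α} {a b I J : α → ℝ}
    {K₁ C₁ K₂ C₂ : ℝ} (hC₁ : 0 ≤ C₁) (ha : Tendsto a l atTop)
    (hJ : Tendsto (fun r => (b r)⁻¹ * J r) l (𝓝 0)) (hJ0 : ∀ᶠ r in l, 0 ≤ J r)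
    (hb : ∀ᶠ r in l, 0 < b r ∧ b r ≤ K₂ + C₂ * a r)
    (hI : ∀ᶠ r in l, 0 ≤ I r ∧ I r ≤ K₁ + C₁ * J r) :
    Tendsto (fun r => (a r)⁻¹ * I r) l (𝓝 0) := by
  -- `I / a ≤ K₁ / a + C₁ (J / b) (b / a)` and `b / a ≤ K₂ / a + C₂`
  have hbound : Tendsto (fun r => (a r)⁻¹ * K₁ + C₁ * ((b r)⁻¹ * J r) * ((a r)⁻¹ * K₂ + C₂)) l
      (𝓝 0) := by
    have ha' := ha.inv_tendsto_atTop
    simpa using (ha'.mul_const K₁).add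
      ((hJ.const_mul C₁).mul ((ha'.mul_const K₂).add_const C₂))
  refine squeeze_zero' ?_ ?_ hbound
  · filter_upwards [ha.eventually_gt_atTop 0, hI] with r har hIr
    exact mul_nonneg (inv_nonneg.mpr har.le) hIr.1
  · filter_upwards [ha.eventually_gt_atTop 0, hJ0, hb, hI] with r har hJr hbr hIr
    calc (a r)⁻¹ * I r ≤ (a r)⁻¹ * (K₁ + C₁ * J r) := by gcongr; exact hIr.2
      _ = (a r)⁻¹ * K₁ + C₁ * ((b r)⁻¹ * J r) * ((a r)⁻¹ * b r) := by
        field_simp [hbr.1.ne']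
      _ ≤ (a r)⁻¹ * K₁ + C₁ * ((b r)⁻¹ * J r) * ((a r)⁻¹ * (K₂ + C₂ * a r)) := by
        have hJb : 0 ≤ C₁ * ((b r)⁻¹ * J r) :=
          mul_nonneg hC₁ (mul_nonneg (inv_nonneg.mpr hbr.1.le) hJr)
        gcongr; exact hbr.2
      _ = (a r)⁻¹ * K₁ + C₁ * ((b r)⁻¹ * J r) * ((a r)⁻¹ * K₂ + C₂) := by
        field_simp [har.ne']

section TimeScale

variable {T : Set ℝ} {σ τ : ℝ}

lemma tsPi_neg (hτ : τ ∈ tsPi T) : -τ ∈ tsPi T := fun t ht => by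
  simpa [sub_eq_add_neg, and_comm] using hτ t ht

lemma tsPi_add (hσ : σ ∈ tsPi T) (hτ : τ ∈ tsPi T) : σ + τ ∈ tsPi T := fun t ht =>
  ⟨by simpa [add_assoc] using (hτ _ (hσ t ht).1).1,
    by simpa [sub_add_eq_sub_sub] using (hτ _ (hσ t ht).2).2⟩

lemma tsPi_abs (hτ : τ ∈ tsPi T) : |τ| ∈ tsPi T := by
  rcases abs_choice τ with h | h <;> rw [h]
  exacts [hτ, tsPi_neg hτ]

lemma add_mem_iff_of_mem_tsPi (hτ : τ ∈ tsPi T) {t : ℝ} : t + τ ∈ T ↔ t ∈ T :=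
  ⟨fun h => by simpa using (hτ _ h).2, fun h => (hτ t h).1⟩

lemma tsSigma_add (hτ : τ ∈ tsPi T) {t : ℝ} (ht : t ∈ T) :
    tsSigma T (t + τ) = tsSigma T t + τ := by
  have himage : {s | s ∈ T ∧ t + τ < s} = (· + τ) '' {s | s ∈ T ∧ t < s} := by
    ext s
    refine ⟨fun ⟨hs, hlt⟩ => ⟨s - τ, ⟨(hτ s hs).2, by linarith⟩, by ring⟩, ?_⟩
    rintro ⟨x, ⟨hx, hlt⟩, rfl⟩
    exact ⟨(hτ x hx).1, by linarith⟩
  -- the junk value `sInf ∅ = 0` would break the identity, but `{s ∈ T | t < s}` contains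
  -- `t + |τ|` unless `τ = 0`
  by_cases hne : {s | s ∈ T ∧ t < s}.Nonempty
  · rw [tsSigma, tsSigma, himage, ← Monotone.map_csInf_of_continuousAt
      (continuous_add_const τ).continuousAt (fun _ _ h => by simpa using h) hne
      ⟨t, fun s hs => hs.2.le⟩]
  · have hτ0 : τ = 0 := by
      by_contra h0
      exact hne ⟨t + |τ|, (tsPi_abs hτ t ht).1, by simpa using abs_pos.mpr h0⟩
    simp [hτ0]

lemma tsGrain_add (hτ : τ ∈ tsPi T) {t : ℝ} (ht : t ∈ T) :
    tsGrain T (t + τ) = tsGrain T t := by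
  rw [tsGrain, tsGrain, tsSigma_add hτ ht]
  ring

end TimeScale

section DeltaMeasure

variable {T : Set ℝ} {σ : ℝ}

lemma ae_mem_deltaMeasure (hT : MeasurableSet T) : ∀ᵐ t ∂(deltaMeasure T), t ∈ T := by
  rw [ae_iff]
  change deltaMeasure T Tᶜ = 0
  rw [deltaMeasure, Measure.add_apply, Measure.restrict_apply hT.compl,
    Measure.sum_apply _ hT.compl, ENNReal.tsum_eq_zero.mpr]
  · simp
  · intro p
    simp [Measure.dirac_apply' _ hT.compl, p.2.1]

def rightScatteredAddEquiv (hσ : σ ∈ tsPi T) :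
    {t : ℝ // t ∈ T ∧ t < tsSigma T t} ≃ {t : ℝ // t ∈ T ∧ t < tsSigma T t} where
  toFun p := ⟨p.1 + σ, (hσ _ p.2.1).1, by rw [tsSigma_add hσ p.2.1]; linarith [p.2.2]⟩
  invFun p := ⟨p.1 + -σ, (tsPi_neg hσ _ p.2.1).1, by
    rw [tsSigma_add (tsPi_neg hσ) p.2.1]; linarith [p.2.2]⟩
  left_inv p := by ext; simp
  right_inv p := by ext; simp

lemma measurePreserving_add_right_deltaMeasure (hσ : σ ∈ tsPi T) :
    MeasurePreserving (· + σ) (deltaMeasure T) (deltaMeasure T) := by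
  refine ⟨measurable_add_const σ, ?_⟩
  have hemb : MeasurableEmbedding (· + σ : ℝ → ℝ) := (Homeomorph.addRight σ).measurableEmbedding
  have hpre : (· + σ) ⁻¹' T = T := Set.ext fun _ => add_mem_iff_of_mem_tsPi hσ
  rw [deltaMeasure, Measure.map_add _ _ (measurable_add_const σ), Measure.map_sum
    (measurable_add_const σ).aemeasurable]
  congr 1
  · conv_lhs => rw [← hpre]
    rw [← hemb.restrict_map, map_add_right_eq_self]
  · conv_rhs => rw [← Measure.sum_comp_equiv (rightScatteredAddEquiv hσ)]
    congr 1
    ext1 p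
    simp [Measure.map_smul, Measure.map_dirac, rightScatteredAddEquiv, tsGrain_add hσ p.2.1]

lemma deltaMeasure_restrict_self (hT : MeasurableSet T) :
    (deltaMeasure T).restrict T = deltaMeasure T :=
  Measure.restrict_eq_self_of_ae_mem (ae_mem_deltaMeasure hT)

lemma aestronglyMeasurable_deltaMeasure_of_continuousOn {E : Type*} [NormedAddCommGroup E]
    (hT : MeasurableSet T) {F : ℝ → E} (hF : ContinuousOn F T) :
    AEStronglyMeasurable F (deltaMeasure T) := by
  have hF' := hF.aestronglyMeasurable (μ := deltaMeasure T) hT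
  rwa [deltaMeasure_restrict_self hT] at hF'

end DeltaMeasure

section Weight

variable {T : Set ℝ} {u : ℝ → ℝ} {σ : ℝ}

lemma integrableOn_mul_of_bound {v F : ℝ → ℝ} {A : Set ℝ} {B : ℝ} (hT : MeasurableSet T)
    (hv : IntegrableOn v A (deltaMeasure T)) (hF : AEStronglyMeasurable F (deltaMeasure T))
    (hFB : ∀ t ∈ T, ‖F t‖ ≤ B) : IntegrableOn (fun t => F t * v t) A (deltaMeasure T) :=
  hv.bdd_mul hF.restrict <| ae_restrict_of_ae <| (ae_mem_deltaMeasure hT).mono hFB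

lemma UInfty.integrableOn (hu : UInfty T u) {A : Set ℝ} (hAT : A ⊆ T)
    (hA : Bornology.IsBounded A) : IntegrableOn u A (deltaMeasure T) := by
  simpa [Set.inter_eq_left.mpr hAT] using hu.2.2.1 A hA

lemma UInfty.integrableOn_comp_add (hu : UInfty T u) (hσ : σ ∈ tsPi T) {A : Set ℝ}
    (hAT : A ⊆ T) (hA : Bornology.IsBounded A) :
    IntegrableOn (fun t => u (t + σ)) A (deltaMeasure T) := by
  obtain ⟨R, hR⟩ := hA.subset_closedBall 0
  have hsub : A ⊆ (· + σ) ⁻¹' (Metric.closedBall σ R ∩ T) := fun t ht =>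
    ⟨by simpa using hR ht, (hσ t (hAT ht)).1⟩
  refine IntegrableOn.mono_set ?_ hsub
  exact ((measurePreserving_add_right_deltaMeasure hσ).integrableOn_comp_preimage
    (Homeomorph.addRight σ).measurableEmbedding).2 (hu.2.2.1 _ Metric.isBounded_closedBall)

lemma UInftyInv.exists_comp_add_le (hu : UInftyInv T u) (hσ : σ ∈ tsPi T) :
    ∃ C M : ℝ, 0 ≤ C ∧ ∀ t ∈ T, M ≤ |t| → u (t + σ) ≤ C * u t := by
  obtain ⟨C, hC⟩ := hu.2 σ hσ
  rw [absAtTopIn, eventually_inf_principal, eventually_sup, eventually_atTop,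
    eventually_atBot] at hC
  obtain ⟨⟨a, ha⟩, ⟨b, hb⟩⟩ := hC
  refine ⟨max C 0, max a (-b), le_max_right _ _, fun t ht hMt => ?_⟩
  have hratio : u (t + σ) / u t ≤ C := by
    rcases le_abs'.mp hMt with h | h
    · exact hb t (by linarith [le_max_right a (-b)]) ht
    · exact ha t (le_trans (le_max_left _ _) h) ht
  rw [div_le_iff₀ (hu.1.2.1 t ht)] at hratio
  exact hratio.trans (by gcongr; exacts [(hu.1.2.1 t ht).le, le_max_left _ _])

end Weight

section Windows

variable {T : Set ℝ} {r ρ τ : ℝ}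

lemma Qr_subset : Qr T r ⊆ T := inter_subset_right

lemma measurableSet_Qr (hT : MeasurableSet T) : MeasurableSet (Qr T r) :=
  measurableSet_Icc.inter hT

lemma isBounded_Qr : Bornology.IsBounded (Qr T r) :=
  Metric.isBounded_Icc _ _ |>.subset inter_subset_left

lemma preimage_add_Qr_subset (hτ : τ ∈ tsPi T) : (· + τ) ⁻¹' Qr T r ⊆ Qr T (r + |τ|) := by
  rintro t ⟨⟨h₁, h₂⟩, ht⟩
  exact ⟨⟨by linarith [le_abs_self τ], by linarith [neg_abs_le τ]⟩,
    (add_mem_iff_of_mem_tsPi hτ).1 ht⟩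

lemma Qr_add_subset_union (hρ : ρ ∈ tsPi T) (hρr : ρ ≤ r) :
    Qr T (r + ρ) ⊆ (· + ρ) ⁻¹' Qr T r ∪ (· + -ρ) ⁻¹' Qr T r := by
  rintro t ⟨⟨h₁, h₂⟩, ht⟩
  rcases le_total t (tsT0 T) with h | h
  · exact Or.inl ⟨⟨by linarith, by linarith⟩, (hρ t ht).1⟩
  · exact Or.inr ⟨⟨by linarith, by linarith⟩, (tsPi_neg hρ t ht).1⟩

end Windows

section WeightedIntegrals

variable {T : Set ℝ} {u : ℝ → ℝ} {σ τ ρ : ℝ}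

lemma setIntegral_mul_comp_add_le (hT : MeasurableSet T) (hu : UInfty T u) (hσ : σ ∈ tsPi T)
    {C M B : ℝ} (hC : 0 ≤ C) (hCM : ∀ t ∈ T, M ≤ |t| → u (t + σ) ≤ C * u t) {F : ℝ → ℝ}
    (hF : AEStronglyMeasurable F (deltaMeasure T)) (hF0 : ∀ t ∈ T, 0 ≤ F t)
    (hFB : ∀ t ∈ T, F t ≤ B) {A : Set ℝ} (hA : MeasurableSet A) (hAT : A ⊆ T)
    (hAb : Bornology.IsBounded A) :
    ∫ t in A, F t * u (t + σ) ∂(deltaMeasure T) ≤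
      B * ∫ t in Icc (-M) M ∩ T, u (t + σ) ∂(deltaMeasure T) +
        C * ∫ t in A, F t * u t ∂(deltaMeasure T) := by
  have hnorm : ∀ t ∈ T, ‖F t‖ ≤ B := fun t ht => by
    rw [Real.norm_of_nonneg (hF0 t ht)]; exact hFB t ht
  have hupos : ∀ t ∈ T, 0 < u t := hu.2.1
  have hshift : IntegrableOn (fun t => F t * u (t + σ)) A (deltaMeasure T) :=
    integrableOn_mul_of_bound hT (hu.integrableOn_comp_add hσ hAT hAb) hF hnorm
  have hweight : IntegrableOn (fun t => F t * u t) A (deltaMeasure T) :=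
    integrableOn_mul_of_bound hT (hu.integrableOn hAT hAb) hF hnorm
  have hcore : IntegrableOn (fun t => u (t + σ)) (Icc (-M) M ∩ T) (deltaMeasure T) :=
    hu.integrableOn_comp_add hσ inter_subset_right (Metric.isBounded_Icc _ _ |>.subset
      inter_subset_left)
  rw [← integral_inter_add_sdiff measurableSet_Icc hshift]
  refine add_le_add ?_ ?_
  · calc ∫ t in A ∩ Icc (-M) M, F t * u (t + σ) ∂(deltaMeasure T)
        ≤ ∫ t in A ∩ Icc (-M) M, B * u (t + σ) ∂(deltaMeasure T) :=
          setIntegral_mono_on (hshift.mono_set inter_subset_left)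
            ((hcore.mono_set fun t ht => ⟨ht.2, hAT ht.1⟩).const_mul B)
            (hA.inter measurableSet_Icc) fun t ht =>
              mul_le_mul_of_nonneg_right (hFB t (hAT ht.1)) (hupos _ (hσ t (hAT ht.1)).1).le
      _ ≤ ∫ t in Icc (-M) M ∩ T, B * u (t + σ) ∂(deltaMeasure T) :=
          setIntegral_mono_set (hcore.const_mul B)
            (ae_restrict_of_forall_mem (measurableSet_Icc.inter hT) fun t ht =>
              mul_nonneg ((hF0 t ht.2).trans (hFB t ht.2)) (hupos _ (hσ t ht.2).1).le)
            (LE.le.eventuallyLE fun t ht => ⟨ht.2, hAT ht.1⟩)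
      _ = B * ∫ t in Icc (-M) M ∩ T, u (t + σ) ∂(deltaMeasure T) := integral_const_mul _ _
  · calc ∫ t in A \ Icc (-M) M, F t * u (t + σ) ∂(deltaMeasure T)
        ≤ ∫ t in A \ Icc (-M) M, C * (F t * u t) ∂(deltaMeasure T) := by
          refine setIntegral_mono_on (hshift.mono_set sdiff_subset)
            ((hweight.mono_set sdiff_subset).const_mul C) (hA.diff measurableSet_Icc) ?_
          rintro t ⟨htA, htM⟩
          have hMt : M ≤ |t| := by
            rw [mem_Icc, not_and_or, not_le, not_le] at htM
            exact le_abs'.mpr (htM.imp (fun h => by linarith) le_of_lt)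
          calc F t * u (t + σ) ≤ F t * (C * u t) :=
                mul_le_mul_of_nonneg_left (hCM t (hAT htA) hMt) (hF0 t (hAT htA))
            _ = C * (F t * u t) := by ring
      _ ≤ ∫ t in A, C * (F t * u t) ∂(deltaMeasure T) :=
          setIntegral_mono_set (hweight.const_mul C)
            (ae_restrict_of_forall_mem hA fun t ht =>
              mul_nonneg hC (mul_nonneg (hF0 t (hAT ht)) (hupos t (hAT ht)).le))
            sdiff_subset.eventuallyLE
      _ = C * ∫ t in A, F t * u t ∂(deltaMeasure T) := integral_const_mul _ _

lemma setIntegral_Qr_comp_sub_mul_le (hT : MeasurableSet T) (hu : UInfty T u)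
    (hτ : τ ∈ tsPi T) {C M B : ℝ} (hC : 0 ≤ C) (hCM : ∀ t ∈ T, M ≤ |t| → u (t + τ) ≤ C * u t)
    {F : ℝ → ℝ} (hF : AEStronglyMeasurable F (deltaMeasure T)) (hF0 : ∀ t ∈ T, 0 ≤ F t)
    (hFB : ∀ t ∈ T, F t ≤ B) (r : ℝ) :
    ∫ t in Qr T r, F (t - τ) * u t ∂(deltaMeasure T) ≤
      B * ∫ t in Icc (-M) M ∩ T, u (t + τ) ∂(deltaMeasure T) +
        C * ∫ t in Qr T (r + |τ|), F t * u t ∂(deltaMeasure T) := by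
  have hnorm : ∀ t ∈ T, ‖F t‖ ≤ B := fun t ht => by
    rw [Real.norm_of_nonneg (hF0 t ht)]; exact hFB t ht
  have hcov : ∫ t in Qr T r, F (t - τ) * u t ∂(deltaMeasure T) =
      ∫ t in (· + τ) ⁻¹' Qr T r, F t * u (t + τ) ∂(deltaMeasure T) := by
    rw [← (measurePreserving_add_right_deltaMeasure hτ).setIntegral_preimage_emb
      (Homeomorph.addRight τ).measurableEmbedding (fun t => F (t - τ) * u t)]
    simp
  calc ∫ t in Qr T r, F (t - τ) * u t ∂(deltaMeasure T)
      ≤ ∫ t in Qr T (r + |τ|), F t * u (t + τ) ∂(deltaMeasure T) := by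
        rw [hcov]
        exact setIntegral_mono_set
          (integrableOn_mul_of_bound hT (hu.integrableOn_comp_add hτ Qr_subset isBounded_Qr)
            hF hnorm)
          (ae_restrict_of_forall_mem (measurableSet_Qr hT) fun t ht =>
            mul_nonneg (hF0 t (Qr_subset ht)) (hu.2.1 _ (hτ t (Qr_subset ht)).1).le)
          (preimage_add_Qr_subset hτ).eventuallyLE
    _ ≤ _ := setIntegral_mul_comp_add_le hT hu hτ hC hCM hF hF0 hFB (measurableSet_Qr hT)
        Qr_subset isBounded_Qr

lemma UInftyInv.exists_setIntegral_preimage_add_Qr_le (hT : MeasurableSet T)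
    (hu : UInftyInv T u) (hσ : σ ∈ tsPi T) :
    ∃ K C : ℝ, ∀ r, ∫ t in (· + σ) ⁻¹' Qr T r, u t ∂(deltaMeasure T) ≤ K + C * uQ T u r := by
  obtain ⟨C, M, hC, hCM⟩ := hu.exists_comp_add_le (tsPi_neg hσ)
  refine ⟨∫ t in Icc (-M) M ∩ T, u (t + -σ) ∂(deltaMeasure T), C, fun r => ?_⟩
  have hcov : ∫ t in (· + σ) ⁻¹' Qr T r, u t ∂(deltaMeasure T) =
      ∫ t in Qr T r, 1 * u (t + -σ) ∂(deltaMeasure T) := by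
    rw [← (measurePreserving_add_right_deltaMeasure hσ).setIntegral_preimage_emb
      (Homeomorph.addRight σ).measurableEmbedding (fun t => 1 * u (t + -σ))]
    simp
  have hbound := setIntegral_mul_comp_add_le hT hu.1 (tsPi_neg hσ) hC hCM
    aestronglyMeasurable_const (fun _ _ => zero_le_one) (fun _ _ => le_rfl)
    (measurableSet_Qr hT) (A := Qr T r) Qr_subset isBounded_Qr
  rw [hcov]
  simpa [uQ] using hbound

lemma UInftyInv.exists_uQ_add_le (hT : MeasurableSet T) (hu : UInftyInv T u)
    (hρ : ρ ∈ tsPi T) : ∃ K C : ℝ, ∀ r, ρ ≤ r → uQ T u (r + ρ) ≤ K + C * uQ T u r := by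
  obtain ⟨K₁, C₁, h₁⟩ := hu.exists_setIntegral_preimage_add_Qr_le hT hρ
  obtain ⟨K₂, C₂, h₂⟩ := hu.exists_setIntegral_preimage_add_Qr_le hT (tsPi_neg hρ)
  refine ⟨K₁ + K₂, C₁ + C₂, fun r hρr => ?_⟩
  have hpre : ∀ σ ∈ tsPi T, MeasurableSet ((· + σ) ⁻¹' Qr T r) ∧
      IntegrableOn u ((· + σ) ⁻¹' Qr T r) (deltaMeasure T) ∧ (· + σ) ⁻¹' Qr T r ⊆ T :=
    fun σ hσ => ⟨measurable_add_const σ (measurableSet_Qr hT),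
      (hu.1.integrableOn Qr_subset isBounded_Qr).mono_set (preimage_add_Qr_subset hσ),
      (preimage_add_Qr_subset hσ).trans Qr_subset⟩
  obtain ⟨hm₁, hi₁, hs₁⟩ := hpre ρ hρ
  obtain ⟨hm₂, hi₂, hs₂⟩ := hpre (-ρ) (tsPi_neg hρ)
  calc uQ T u (r + ρ)
      ≤ ∫ t in (· + ρ) ⁻¹' Qr T r ∪ (· + -ρ) ⁻¹' Qr T r, u t ∂(deltaMeasure T) :=
        setIntegral_mono_set (hi₁.union hi₂)
          (ae_restrict_of_forall_mem (hm₁.union hm₂) fun t ht =>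
            (hu.1.2.1 t (union_subset hs₁ hs₂ ht)).le)
          (Qr_add_subset_union hρ hρr).eventuallyLE
    _ ≤ ∫ t in (· + ρ) ⁻¹' Qr T r, u t ∂(deltaMeasure T) +
          ∫ t in (· + -ρ) ⁻¹' Qr T r, u t ∂(deltaMeasure T) :=
        setIntegral_union_le_add hm₁ hm₂ hi₁ hi₂ fun t ht => (hu.1.2.1 t (hs₂ ht)).le
    _ ≤ K₁ + C₁ * uQ T u r + (K₂ + C₂ * uQ T u r) := add_le_add (h₁ r) (h₂ r)
    _ = K₁ + K₂ + (C₁ + C₂) * uQ T u r := by ring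

end WeightedIntegrals

section PseudoAlmostPeriodic

variable {E F : Type*} [NormedAddCommGroup E] [NormedAddCommGroup F] {T : Set ℝ} {u : ℝ → ℝ}
  {τ : ℝ}

lemma BCfun.integrableOn_norm_mul (hT : MeasurableSet T) (hu : UInfty T u) {h : ℝ → E}
    (hh : BCfun T h) (r : ℝ) :
    IntegrableOn (fun t => ‖h t‖ * u t) (Qr T r) (deltaMeasure T) := by
  obtain ⟨B, hB⟩ := hh.2
  exact integrableOn_mul_of_bound hT (hu.integrableOn Qr_subset isBounded_Qr)
    (aestronglyMeasurable_deltaMeasure_of_continuousOn hT hh.1).norm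
    fun t ht => by rw [norm_norm]; exact hB t ht

lemma setIntegral_Qr_norm_mul_nonneg (hT : MeasurableSet T) (hu : UInfty T u) (h : ℝ → E)
    (r : ℝ) : 0 ≤ ∫ t in Qr T r, ‖h t‖ * u t ∂(deltaMeasure T) :=
  setIntegral_nonneg (measurableSet_Qr hT) fun t ht =>
    mul_nonneg (norm_nonneg _) (hu.2.1 t (Qr_subset ht)).le

lemma tendsto_add_alongPi (hτ : τ ∈ tsPi T) : Tendsto (· + τ) (alongPi T) (alongPi T) :=
  tendsto_inf.mpr ⟨(tendsto_atTop_add_const_right atTop τ tendsto_id).mono_left inf_le_left,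
    tendsto_principal.mpr <| eventually_inf_principal.mpr <| .of_forall fun _ hr => tsPi_add hr hτ⟩

lemma PAP0fun.comp_sub (hT : MeasurableSet T) (hu : UInftyInv T u) (hτ : τ ∈ tsPi T)
    {h : ℝ → E} (hh : PAP0fun T u h) : PAP0fun T u (fun t => h (t - τ)) := by
  obtain ⟨⟨hcont, B, hB⟩, hmean⟩ := hh
  have hsub : ∀ t ∈ T, t - τ ∈ T := fun t ht => (hτ t ht).2
  refine ⟨⟨hcont.comp (continuous_sub_right τ).continuousOn hsub, B,
    fun t ht => hB _ (hsub t ht)⟩, ?_⟩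
  obtain ⟨C, M, hC, hCM⟩ := hu.exists_comp_add_le hτ
  obtain ⟨K, C', hK⟩ := hu.exists_uQ_add_le hT (tsPi_abs hτ)
  have hshift := tendsto_add_alongPi (tsPi_abs hτ)
  have huQ : Tendsto (uQ T u) (alongPi T) atTop := hu.1.2.2.2.2
  have hgrowth : ∀ᶠ r in alongPi T,
      0 < uQ T u (r + |τ|) ∧ uQ T u (r + |τ|) ≤ K + C' * uQ T u r := by
    filter_upwards [(huQ.comp hshift).eventually_gt_atTop 0,
      (eventually_ge_atTop |τ|).filter_mono inf_le_left] with r hpos hr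
    exact ⟨hpos, hK r hr⟩
  have hshifted : ∀ r, ∫ t in Qr T r, ‖h (t - τ)‖ * u t ∂(deltaMeasure T) ≤
      B * ∫ t in Icc (-M) M ∩ T, u (t + τ) ∂(deltaMeasure T) +
        C * ∫ t in Qr T (r + |τ|), ‖h t‖ * u t ∂(deltaMeasure T) :=
    setIntegral_Qr_comp_sub_mul_le hT hu.1 hτ hC hCM
      (aestronglyMeasurable_deltaMeasure_of_continuousOn hT hcont).norm
      (fun _ _ => norm_nonneg _) hB
  exact tendsto_inv_mul_nhds_zero_of_le hC huQ (hmean.comp hshift)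
    (.of_forall fun r => setIntegral_Qr_norm_mul_nonneg hT hu.1 h (r + |τ|)) hgrowth
    (.of_forall fun r => ⟨setIntegral_Qr_norm_mul_nonneg hT hu.1 _ r, hshifted r⟩)

lemma PAP0fun.of_norm_le (hT : MeasurableSet T) (hu : UInfty T u) {k : ℝ → E} {H : ℝ → F}
    (hk : PAP0fun T u k) (hH : ContinuousOn H T) {c : ℝ} (hc : 0 ≤ c)
    (hHk : ∀ t ∈ T, ‖H t‖ ≤ c * ‖k t‖) : PAP0fun T u H := by
  obtain ⟨B, hB⟩ := hk.1.2
  have hHbc : BCfun T H :=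
    ⟨hH, c * B, fun t ht => (hHk t ht).trans (mul_le_mul_of_nonneg_left (hB t ht) hc)⟩
  refine ⟨hHbc, ?_⟩
  refine squeeze_zero' ?_ ?_ (by simpa using hk.2.const_mul c)
  · filter_upwards [hu.2.2.2.2.eventually_ge_atTop 0] with r hr
    exact mul_nonneg (inv_nonneg.mpr hr) (setIntegral_Qr_norm_mul_nonneg hT hu H r)
  · filter_upwards [hu.2.2.2.2.eventually_ge_atTop 0] with r hr
    calc (uQ T u r)⁻¹ * ∫ t in Qr T r, ‖H t‖ * u t ∂(deltaMeasure T)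
        ≤ (uQ T u r)⁻¹ * ∫ t in Qr T r, c * (‖k t‖ * u t) ∂(deltaMeasure T) := by
          refine mul_le_mul_of_nonneg_left ?_ (inv_nonneg.mpr hr)
          refine setIntegral_mono_on (hHbc.integrableOn_norm_mul hT hu r)
            ((hk.1.integrableOn_norm_mul hT hu r).const_mul c) (measurableSet_Qr hT) ?_
          intro t ht
          rw [← mul_assoc]
          exact mul_le_mul_of_nonneg_right (hHk t (Qr_subset ht)) (hu.2.1 t (Qr_subset ht)).le
      _ = c * ((uQ T u r)⁻¹ * ∫ t in Qr T r, ‖k t‖ * u t ∂(deltaMeasure T)) := by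
          rw [integral_const_mul]; ring

end PseudoAlmostPeriodic

section AlmostPeriodic

variable {E F : Type*} [NormedAddCommGroup E] [NormedAddCommGroup F] {T : Set ℝ} {τ : ℝ}

lemma APfun.comp_sub {g : ℝ → E} (hg : APfun T g) (hτ : τ ∈ tsPi T) :
    APfun T (fun t => g (t - τ)) := by
  refine ⟨hg.1.comp (continuous_sub_right τ).continuousOn fun t ht => (hτ t ht).2,
    fun ε hε => ?_⟩
  obtain ⟨l, hl, hper⟩ := hg.2 ε hε
  refine ⟨l, hl, fun x => ?_⟩
  obtain ⟨s, hs, hsx, hgs⟩ := hper x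
  refine ⟨s, hs, hsx, fun t ht => ?_⟩
  simpa only [sub_add_eq_add_sub] using hgs (t - τ) (hτ t ht).2

lemma APfun.lipschitzWith_comp {g : ℝ → E} {f : E → F} {L : NNReal} (hg : APfun T g)
    (hf : LipschitzWith L f) : APfun T (fun t => f (g t)) := by
  refine ⟨hf.continuous.comp_continuousOn hg.1, fun ε hε => ?_⟩
  have hL : (0 : ℝ) < L + 1 := by positivity
  obtain ⟨l, hl, hper⟩ := hg.2 (ε / (L + 1)) (by positivity)
  refine ⟨l, hl, fun x => ?_⟩
  obtain ⟨s, hs, hsx, hgs⟩ := hper x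
  refine ⟨s, hs, hsx, fun t ht => ?_⟩
  calc ‖f (g (t + s)) - f (g t)‖ ≤ L * ‖g (t + s) - g t‖ := hf.norm_sub_le _ _
    _ ≤ L * (ε / (L + 1)) := by gcongr; exact (hgs t ht).le
    _ < ε := by
      rw [mul_div_assoc', div_lt_iff₀ hL]
      nlinarith

end AlmostPeriodic

/-- If `f : ℝ → ℝ` is Lipschitz, `φ ∈ PAP(T,ℝ,u)` (with `u ∈ U_∞^Inv`) and `τ ∈ Π`, then
`t ↦ f(φ(t − τ))` belongs to `PAP(T,ℝ,u)`. -/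
theorem pap_lipschitz_comp_delay (T : Set ℝ) (hT : APTimeScale T)
    (u : ℝ → ℝ) (hu : UInftyInv T u)
    (f : ℝ → ℝ) (L : NNReal) (hf : LipschitzWith L f)
    (φ : ℝ → ℝ) (hφ : PAPfun T u φ) (τ : ℝ) (hτ : τ ∈ tsPi T) :
    PAPfun T u (fun t => f (φ (t - τ))) := by
  obtain ⟨g, h, hg, hh, hφgh⟩ := hφ
  have hTm : MeasurableSet T := hT.2.1.measurableSet
  have hsub : ∀ t ∈ T, t - τ ∈ T := fun t ht => (hτ t ht).2
  have hφc : ContinuousOn φ T := (hg.1.add hh.1.1).congr hφgh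
  have hcont : ContinuousOn (fun t => f (φ (t - τ)) - f (g (t - τ))) T :=
    hf.continuous.comp_continuousOn (hφc.comp (continuous_sub_right τ).continuousOn hsub) |>.sub
      (hf.continuous.comp_continuousOn (hg.1.comp (continuous_sub_right τ).continuousOn hsub))
  have hbound : ∀ t ∈ T, ‖f (φ (t - τ)) - f (g (t - τ))‖ ≤ L * ‖h (t - τ)‖ := fun t ht => by
    simpa [hφgh _ (hsub t ht)] using hf.norm_sub_le (φ (t - τ)) (g (t - τ))
  exact ⟨fun t => f (g (t - τ)), fun t => f (φ (t - τ)) - f (g (t - τ)),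
    (hg.comp_sub hτ).lipschitzWith_comp hf,
    (hh.comp_sub hTm hu hτ).of_norm_le hTm hu.1 hcont L.coe_nonneg hbound,
    fun t _ => by ring⟩
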